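/- arXiv:2408.16384 — 4 statements merged into one kernel-verified Lean document; each statement's English description precedes it below -/
import Mathlib

section
/- If X follows the Pareto type-I distribution with shape parameter α > 0, then for every t > 1, E[((α+1)/X)·(min(X,t) - 1)] = 1 - t^{-α}, i.e., the fixed point identity F(t) = E[((α+1)/X)(min(X,t)-1)] holds. -/
/-!
Since `(α + 1) / x * α x ^ (-(α + 1)) = α (α + 1) x ^ (-(α + 2))`, the expectation is
`α (α + 1) ∫_{x > 1} (min x t - 1) x ^ (-(α + 2))`. Splitting at `t`, the integrand is
`x ^ (-(α + 1)) - x ^ (-(α + 2))` on `(1, t]` and `(t - 1) x ^ (-(α + 2))` on `(t, ∞)`;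
both pieces are elementary power integrals, and their sum is `(1 - t ^ (-α)) / (α (α + 1))`.
-/

open MeasureTheory Set

theorem integral_Ioc_one_sub_one_mul_rpow {α t : ℝ} (hα : α ≠ 0) (hα' : α ≠ -1) (ht : 1 ≤ t) :
    ∫ x in Ioc 1 t, (x - 1) * x ^ (-(α + 2))
      = (1 - t ^ (-α)) / α - (1 - t ^ (-(α + 1))) / (α + 1) := by
  have h0 : (0:ℝ) ∉ uIcc 1 t := by
    rw [uIcc_of_le ht]; rintro ⟨h, _⟩; norm_num at h
  have hsplit : EqOn (fun x : ℝ => (x - 1) * x ^ (-(α + 2)))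
      (fun x => x ^ (-(α + 1)) - x ^ (-(α + 2))) (uIcc 1 t) := by
    intro x hx
    have hx0 : x ≠ 0 := fun h => h0 (h ▸ hx)
    have : -(α + 1) = -(α + 2) + 1 := by ring
    simp only [this, Real.rpow_add_one hx0]
    ring
  rw [← intervalIntegral.integral_of_le ht, intervalIntegral.integral_congr hsplit,
    intervalIntegral.integral_sub (intervalIntegral.intervalIntegrable_rpow (Or.inr h0))
      (intervalIntegral.intervalIntegrable_rpow (Or.inr h0)),
    integral_rpow (Or.inr ⟨fun h => hα (by linarith), h0⟩),
    integral_rpow (Or.inr ⟨fun h => hα' (by linarith), h0⟩)]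
  have hα1 : α + 1 ≠ 0 := fun h => hα' (by linarith)
  rw [show -(α + 1) + 1 = -α by ring, show -(α + 2) + 1 = -(α + 1) by ring,
    Real.one_rpow, Real.one_rpow]
  field_simp
  ring

theorem integral_Ioi_one_min_sub_one_mul_rpow {α t : ℝ} (hα : -1 < α) (hα0 : α ≠ 0)
    (ht : 1 ≤ t) :
    ∫ x in Ioi 1, (min x t - 1) * x ^ (-(α + 2)) = (1 - t ^ (-α)) / (α * (α + 1)) := by
  have ht0 : 0 < t := by linarith
  have hlt : -(α + 2) < -1 := by linarith
  have hbody : EqOn (fun x : ℝ => (min x t - 1) * x ^ (-(α + 2)))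
      (fun x => (x - 1) * x ^ (-(α + 2))) (Ioc 1 t) := fun x hx => by
    simp only [min_eq_left hx.2]
  have htail : EqOn (fun x : ℝ => (min x t - 1) * x ^ (-(α + 2)))
      (fun x => (t - 1) * x ^ (-(α + 2))) (Ioi t) := fun x hx => by
    simp only [min_eq_right (mem_Ioi.mp hx).le]
  have hint_body : IntegrableOn (fun x : ℝ => (min x t - 1) * x ^ (-(α + 2))) (Ioc 1 t) := by
    refine (ContinuousOn.integrableOn_Icc ?_).mono_set Ioc_subset_Icc_self
    exact ((continuous_id.min continuous_const).sub continuous_const).continuousOn.mul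
      (continuousOn_id.rpow_const fun x hx => Or.inl (zero_lt_one.trans_le hx.1).ne')
  have hint_tail : IntegrableOn (fun x : ℝ => (min x t - 1) * x ^ (-(α + 2))) (Ioi t) :=
    IntegrableOn.congr_fun ((integrableOn_Ioi_rpow_of_lt hlt ht0).const_mul (t - 1))
      htail.symm measurableSet_Ioi
  rw [← Ioc_union_Ioi_eq_Ioi ht,
    setIntegral_union (Ioc_disjoint_Ioi le_rfl) measurableSet_Ioi hint_body hint_tail,
    setIntegral_congr_fun measurableSet_Ioc hbody,
    setIntegral_congr_fun measurableSet_Ioi htail, integral_const_mul,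
    integral_Ioi_rpow_of_lt hlt ht0,
    integral_Ioc_one_sub_one_mul_rpow hα0 hα.ne' ht,
    show -(α + 2) + 1 = -(α + 1) by ring,
    show t ^ (-(α + 1)) = t ^ (-α) * t⁻¹ by
      rw [← Real.rpow_neg_one, ← Real.rpow_add ht0]; ring_nf]
  have hα1 : α + 1 ≠ 0 := by linarith
  field_simp
  ring

/-- Fixed point identity for the Pareto type-I distribution: if `X` has density
`α * x ^ (-(α+1))` on `[1, ∞)` with `α > 0`, then for every `t > 1`,
`E[((α+1)/X) * (min(X,t) - 1)] = 1 - t ^ (-α) = F(t)`. -/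
theorem pareto_fixed_point_identity (α : ℝ) (hα : 0 < α) (t : ℝ) (ht : 1 < t) :
    ∫ x in Set.Ioi (1:ℝ), ((α + 1) / x) * (min x t - 1) * (α * x ^ (-(α + 1)))
      = 1 - t ^ (-α) := by
  have hdensity : EqOn (fun x : ℝ => ((α + 1) / x) * (min x t - 1) * (α * x ^ (-(α + 1))))
      (fun x => α * (α + 1) * ((min x t - 1) * x ^ (-(α + 2)))) (Ioi 1) := fun x hx => by
    have hx0 : x ≠ 0 := by linarith [mem_Ioi.mp hx]
    simp only [show -(α + 1) = -(α + 2) + 1 by ring, Real.rpow_add_one hx0]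
    field_simp
  rw [setIntegral_congr_fun measurableSet_Ioi hdensity, integral_const_mul,
    integral_Ioi_one_min_sub_one_mul_rpow (by linarith) hα.ne' ht.le]
  field_simp
end

section
/- Let X₁, X₂ be i.i.d. continuous positive random variables with CDF F and E[X] < ∞. Then ∫_1^∞ E[((α+1)/X)(min(X,t)-1)] dF(t) = (α+1)·E[(X₂/X₁)·1{X₂ < X₁} − 1/X₁] + (α+1)/2, and hence the departure Δ_I = ∫_1^∞ (E[((α+1)/X)(min(X,t)-1)] − F(t)) dF(t) equals (α+1)·E[(X₂/X₁)·1{X₂ < X₁} − 1/X₁] + α/2. -/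
/-!
For `x ≥ 1` one has `(min x t - 1) / x = 1{x ≤ t} + (1{t < x} t / x - 1 / x)`. Integrating over
`μ ⊗ μ`, the first term contributes `P(X₂ ≤ X₁)`, which is `1/2` because a continuous CDF means
`μ` has no atoms: the events `X₂ ≤ X₁` and `X₁ ≤ X₂` are exchanged by swapping the coordinates and
meet only on the null diagonal. The second term is the swapped form of
`E[(X₂/X₁) 1{X₂ < X₁} - 1/X₁]`. The same computation gives `∫ F dF = P(X₂ ≤ X₁) = 1/2`.
-/

open MeasureTheory ProbabilityTheory Set

lemma nullSingletonClass_of_continuous_cdf {μ : Measure ℝ} [IsProbabilityMeasure μ]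
    (h : Continuous (cdf μ)) : NullSingletonClass μ where
  measure_singleton a := by
    rw [← measure_cdf μ, StieltjesFunction.measure_singleton,
      h.continuousWithinAt.leftLim_eq, sub_self, ENNReal.ofReal_zero]

section LinearOrder

variable {α : Type*} [MeasurableSpace α] [TopologicalSpace α] [LinearOrder α]
  [OrderClosedTopology α] [SecondCountableTopology α] [BorelSpace α]

lemma measureReal_prod_setOf_le_eq_half (μ : Measure α) [IsProbabilityMeasure μ]
    [NullSingletonClass μ] :
    (μ.prod μ).real {p | p.2 ≤ p.1} = 1 / 2 := by
  have hle : MeasurableSet {p : α × α | p.2 ≤ p.1} := measurableSet_le measurable_snd measurable_fst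
  have hge : MeasurableSet {p : α × α | p.1 ≤ p.2} := measurableSet_le measurable_fst measurable_snd
  have hswap : (μ.prod μ).real {p | p.1 ≤ p.2} = (μ.prod μ).real {p | p.2 ≤ p.1} := by
    conv_lhs => rw [← Measure.prod_swap]
    exact map_measureReal_apply measurable_swap hge
  have hdiag : (μ.prod μ).real ({p | p.2 ≤ p.1} ∩ {p | p.1 ≤ p.2}) = 0 := by
    have hpre (x : α) : Prod.mk x ⁻¹' ({p : α × α | p.2 ≤ p.1} ∩ {p | p.1 ≤ p.2}) = {x} := by
      ext y; simp [le_antisymm_iff, and_comm]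
    simp [measureReal_def, Measure.prod_apply (hle.inter hge), hpre]
  have hunion := measureReal_union_add_inter (μ := μ.prod μ) (s := {p : α × α | p.2 ≤ p.1}) hge
  rw [hdiag, hswap, ← ofPred_or] at hunion
  simp only [le_total, ofPred_true, probReal_univ] at hunion
  linarith

end LinearOrder

lemma integral_cdf_eq_half (μ : Measure ℝ) [IsProbabilityMeasure μ] [NullSingletonClass μ] :
    ∫ t, cdf μ t ∂μ = 1 / 2 := by
  have hle : MeasurableSet {p : ℝ × ℝ | p.2 ≤ p.1} := measurableSet_le measurable_snd measurable_fst
  rw [← measureReal_prod_setOf_le_eq_half μ, ← integral_indicator_one hle,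
    integral_prod _ ((integrable_const 1).indicator hle)]
  congr 1 with t
  rw [cdf_eq_real, ← integral_indicator_one measurableSet_Iic]
  rfl

lemma integrable_cdf (μ : Measure ℝ) (ν : Measure ℝ) [IsFiniteMeasure ν] :
    Integrable (cdf μ) ν :=
  Integrable.of_bound (cdf μ).mono.measurable.aestronglyMeasurable 1 <| ae_of_all _ fun t => by
    rw [Real.norm_of_nonneg (cdf_nonneg μ t)]
    exact cdf_le_one μ t

section SupportedAboveOne

variable {μ : Measure ℝ}

lemma ae_one_le_prod (h1 : ∀ᵐ x ∂μ, 1 ≤ x) : ∀ᵐ p ∂μ.prod μ, 1 ≤ p.1 ∧ 1 ≤ p.2 :=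
  (Measure.quasiMeasurePreserving_fst.ae h1).and (Measure.quasiMeasurePreserving_snd.ae h1)

lemma abs_ratio_sub_inv_le_one {x₁ x₂ : ℝ} (h₁ : 1 ≤ x₁) (h₂ : 1 ≤ x₂) :
    |(if x₂ < x₁ then x₂ / x₁ else 0) - 1 / x₁| ≤ 1 := by
  have hx₁ : 0 < x₁ := by linarith
  have hratio : 0 ≤ (if x₂ < x₁ then x₂ / x₁ else 0) ∧ (if x₂ < x₁ then x₂ / x₁ else 0) ≤ 1 := by
    split_ifs with h
    · exact ⟨by positivity, (div_le_one hx₁).2 h.le⟩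
    · simp
  have hinv : 0 ≤ 1 / x₁ ∧ 1 / x₁ ≤ 1 := ⟨by positivity, (div_le_one hx₁).2 h₁⟩
  rw [abs_le]
  constructor <;> linarith [hratio.1, hratio.2, hinv.1, hinv.2]

lemma integrable_ratio_sub_inv [IsFiniteMeasure μ] (h1 : ∀ᵐ x ∂μ, 1 ≤ x) :
    Integrable (fun p : ℝ × ℝ => (if p.2 < p.1 then p.2 / p.1 else 0) - 1 / p.1) (μ.prod μ) := by
  refine Integrable.of_bound ?_ 1 ?_
  · exact ((Measurable.ite (measurableSet_lt measurable_snd measurable_fst)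
      (measurable_snd.div measurable_fst) measurable_const).sub
      (measurable_const.div measurable_fst)).aestronglyMeasurable
  filter_upwards [ae_one_le_prod h1] with p hp
  exact abs_ratio_sub_inv_le_one hp.1 hp.2

lemma min_sub_one_div_eq (t : ℝ) {x : ℝ} (hx : x ≠ 0) :
    (min x t - 1) / x = (Iic t).indicator 1 x + ((if t < x then t / x else 0) - 1 / x) := by
  rcases le_or_gt x t with h | h
  · rw [min_eq_left h, indicator_of_mem (mem_Iic.2 h), if_neg (not_lt.2 h), Pi.one_apply]
    field_simp
    ring
  · rw [min_eq_right h.le, indicator_of_notMem (notMem_Iic.2 h), if_pos h]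
    ring

lemma min_sub_one_div_ae_eq (h1 : ∀ᵐ x ∂μ, 1 ≤ x) :
    (fun p : ℝ × ℝ => (min p.2 p.1 - 1) / p.2) =ᵐ[μ.prod μ] fun p =>
      {p : ℝ × ℝ | p.2 ≤ p.1}.indicator 1 p + ((if p.1 < p.2 then p.1 / p.2 else 0) - 1 / p.2) := by
  filter_upwards [ae_one_le_prod h1] with p hp
  exact min_sub_one_div_eq p.1 (by linarith [hp.2])

lemma integrable_min_sub_one_div [IsFiniteMeasure μ] (h1 : ∀ᵐ x ∂μ, 1 ≤ x) :
    Integrable (fun p : ℝ × ℝ => (min p.2 p.1 - 1) / p.2) (μ.prod μ) :=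
  (((integrable_const 1).indicator (measurableSet_le measurable_snd measurable_fst)).add
    (integrable_ratio_sub_inv h1).swap).congr (min_sub_one_div_ae_eq h1).symm

lemma integral_integral_min_sub_one_div [IsProbabilityMeasure μ] [NullSingletonClass μ]
    (h1 : ∀ᵐ x ∂μ, 1 ≤ x) :
    ∫ t, ∫ x, (min x t - 1) / x ∂μ ∂μ
      = ∫ x₁, ∫ x₂, ((if x₂ < x₁ then x₂ / x₁ else 0) - 1 / x₁) ∂μ ∂μ + 1 / 2 := by
  have hle : MeasurableSet {p : ℝ × ℝ | p.2 ≤ p.1} := measurableSet_le measurable_snd measurable_fst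
  have hswap := integral_prod_swap (μ := μ) (ν := μ)
    fun p : ℝ × ℝ => (if p.2 < p.1 then p.2 / p.1 else 0) - 1 / p.1
  simp only [Prod.fst_swap, Prod.snd_swap] at hswap
  have hind : Integrable ({p : ℝ × ℝ | p.2 ≤ p.1}.indicator (1 : ℝ × ℝ → ℝ)) (μ.prod μ) :=
    (integrable_const 1).indicator hle
  have hratio : Integrable (fun p : ℝ × ℝ => (if p.1 < p.2 then p.1 / p.2 else 0) - 1 / p.2)
      (μ.prod μ) := (integrable_ratio_sub_inv h1).swap
  rw [← integral_prod _ (integrable_min_sub_one_div h1),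
    integral_congr_ae (min_sub_one_div_ae_eq h1),
    integral_add hind hratio,
    integral_indicator_one hle, measureReal_prod_setOf_le_eq_half, hswap,
    integral_prod _ (integrable_ratio_sub_inv h1)]
  ring

end SupportedAboveOne

theorem deltaI_representation_general (α : ℝ)
    (μ : Measure ℝ) [IsProbabilityMeasure μ]
    (hsupp : μ (Set.Iio 1) = 0)
    (F : ℝ → ℝ) (hF : ∀ t, F t = (μ (Set.Iic t)).toReal)
    (hcont : Continuous F) :
    (∫ t, (∫ x, ((α + 1) / x) * (min x t - 1) ∂μ) ∂μ
        = (α + 1) * (∫ x₁, ∫ x₂, ((if x₂ < x₁ then x₂ / x₁ else 0) - 1 / x₁) ∂μ ∂μ)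
          + (α + 1) / 2) ∧
    (∫ t, ((∫ x, ((α + 1) / x) * (min x t - 1) ∂μ) - F t) ∂μ
        = (α + 1) * (∫ x₁, ∫ x₂, ((if x₂ < x₁ then x₂ / x₁ else 0) - 1 / x₁) ∂μ ∂μ)
          + α / 2) := by
  obtain rfl : F = cdf μ := funext fun t => by rw [hF, cdf_eq_real]; rfl
  have := nullSingletonClass_of_continuous_cdf hcont
  have h1 : ∀ᵐ x ∂μ, 1 ≤ x :=
    (measure_eq_zero_iff_ae_notMem.1 hsupp).mono fun _ hx => not_lt.1 hx
  have hscale (t : ℝ) :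
      ∫ x, (α + 1) / x * (min x t - 1) ∂μ = (α + 1) * ∫ x, (min x t - 1) / x ∂μ := by
    rw [← integral_const_mul]
    simp only [div_mul_eq_mul_div, mul_div_assoc]
  have hfirst : ∫ t, ∫ x, (α + 1) / x * (min x t - 1) ∂μ ∂μ
      = (α + 1) * ∫ x₁, ∫ x₂, ((if x₂ < x₁ then x₂ / x₁ else 0) - 1 / x₁) ∂μ ∂μ + (α + 1) / 2 := by
    simp only [hscale, integral_const_mul, integral_integral_min_sub_one_div h1]
    ring
  refine ⟨hfirst, ?_⟩
  have hint : Integrable (fun t => ∫ x, (α + 1) / x * (min x t - 1) ∂μ) μ := by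
    simpa only [hscale] using (integrable_min_sub_one_div h1).integral_prod_left.const_mul (α + 1)
  rw [integral_sub hint (integrable_cdf μ μ), hfirst, integral_cdf_eq_half]
  ring

/-- Let `X₁, X₂` be i.i.d. continuous positive random variables with law `μ`,
CDF `F`, supported on `[1, ∞)`, with finite mean. Then
`∫ E[((α+1)/X)(min(X,t)-1)] dF(t)
  = (α+1)·E[(X₂/X₁)·1{X₂<X₁} − 1/X₁] + (α+1)/2`,
and hence the departure
`Δ_I = ∫ (E[((α+1)/X)(min(X,t)-1)] − F(t)) dF(t)
  = (α+1)·E[(X₂/X₁)·1{X₂<X₁} − 1/X₁] + α/2`. -/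
theorem deltaI_representation (α : ℝ) (hα : 0 < α)
    (μ : Measure ℝ) [IsProbabilityMeasure μ]
    (hsupp : μ (Set.Iio 1) = 0)
    (F : ℝ → ℝ) (hF : ∀ t, F t = (μ (Set.Iic t)).toReal)
    (hcont : Continuous F)
    (hmean : Integrable id μ) :
    (∫ t, (∫ x, ((α + 1) / x) * (min x t - 1) ∂μ) ∂μ
        = (α + 1) * (∫ x₁, ∫ x₂, ((if x₂ < x₁ then x₂ / x₁ else 0) - 1 / x₁) ∂μ ∂μ)
          + (α + 1) / 2) ∧
    (∫ t, ((∫ x, ((α + 1) / x) * (min x t - 1) ∂μ) - F t) ∂μ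
        = (α + 1) * (∫ x₁, ∫ x₂, ((if x₂ < x₁ then x₂ / x₁ else 0) - 1 / x₁) ∂μ ∂μ)
          + α / 2) :=
  deltaI_representation_general α μ hsupp F hF hcont
end

section
/- If X₁, X₂ are i.i.d. Pareto type-I random variables with shape parameter α > 0, then E[(X₂/X₁)·1{X₂ < X₁} − 1/X₁] = −α/(2(α+1)), so that Δ_I = (α+1)·E[(X₂/X₁)·1{X₂<X₁} − 1/X₁] + α/2 = 0. -/
open MeasureTheory Set Filter Topology

noncomputable def paretoF (α : ℝ) (x : ℝ) : ℝ := ∫ t in (1:ℝ)..x, t ^ (-α)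

lemma paretoF_hasDerivAt {α : ℝ} (hα : 0 < α) {x : ℝ} (hx : 1 ≤ x) :
    HasDerivAt (paretoF α) (x ^ (-α)) x := by
  have hx0 : (0:ℝ) < x := lt_of_lt_of_le one_pos hx
  apply intervalIntegral.integral_hasDerivAt_right
  · apply intervalIntegral.intervalIntegrable_rpow
    right
    rw [Set.uIcc_of_le hx]
    rintro ⟨h0, _⟩
    linarith
  · exact ((measurable_id.pow_const _).aestronglyMeasurable).stronglyMeasurableAtFilter
  · exact Real.continuousAt_rpow_const x _ (Or.inl hx0.ne')

lemma paretoF_nonneg {α : ℝ} {x : ℝ} (hx : 1 ≤ x) : 0 ≤ paretoF α x :=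
  intervalIntegral.integral_nonneg hx (fun t ht => Real.rpow_nonneg (by linarith [ht.1]) _)

lemma paretoF_le {α : ℝ} (hα : 0 < α) {x : ℝ} (hx : 1 ≤ x) : paretoF α x ≤ x - 1 := by
  have h : paretoF α x ≤ ∫ t in (1:ℝ)..x, (1:ℝ) := by
    apply intervalIntegral.integral_mono_on hx
    · apply intervalIntegral.intervalIntegrable_rpow
      right
      rw [Set.uIcc_of_le hx]
      rintro ⟨h0, _⟩
      linarith
    · exact intervalIntegrable_const
    · intro t ht
      exact Real.rpow_le_one_of_one_le_of_nonpos ht.1 (by linarith)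
  simpa using h

lemma pareto_inner_eq {α : ℝ} (hα : 0 < α) {x₁ : ℝ} (hx₁ : 1 < x₁) :
    ∫ x₂ in Set.Ioi (1:ℝ), ((if x₂ < x₁ then x₂ / x₁ else 0) - 1 / x₁) * (α * x₂ ^ (-(α + 1)))
      = (α / x₁) * paretoF α x₁ - 1 / x₁ := by
  have hlt : -(α + 1) < -1 := by linarith
  have hρ : IntegrableOn (fun x : ℝ => x ^ (-(α + 1))) (Ioi 1) :=
    integrableOn_Ioi_rpow_of_lt hlt one_pos
  have hcont : ContinuousOn (fun x : ℝ => x / x₁ * (α * x ^ (-(α + 1)))) (Icc 1 x₁) := by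
    apply ContinuousOn.mul
    · exact (continuous_id.div_const x₁).continuousOn
    · exact continuousOn_const.mul (ContinuousOn.rpow_const continuousOn_id
        (fun t ht => Or.inl (by have := ht.1; positivity)))
  have hind : Integrable (fun x₂ : ℝ =>
      Set.indicator (Iio x₁) (fun x => x / x₁ * (α * x ^ (-(α + 1)))) x₂)
      (volume.restrict (Ioi 1)) := by
    rw [integrable_indicator_iff measurableSet_Iio]
    rw [IntegrableOn, Measure.restrict_restrict measurableSet_Iio, Set.inter_comm,
      Set.Ioi_inter_Iio]
    exact (hcont.integrableOn_Icc).mono_set Set.Ioo_subset_Icc_self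
  have hsplit : (fun x₂ : ℝ => ((if x₂ < x₁ then x₂ / x₁ else 0) - 1 / x₁) * (α * x₂ ^ (-(α + 1))))
      = fun x₂ => Set.indicator (Iio x₁) (fun x => x / x₁ * (α * x ^ (-(α + 1)))) x₂
          - (1 / x₁) * (α * x₂ ^ (-(α + 1))) := by
    funext x₂
    by_cases h : x₂ < x₁ <;> simp [Set.indicator_apply, h] <;> ring
  rw [hsplit, integral_sub hind (((hρ.const_mul α).const_mul (1 / x₁)))]
  have h1 : ∫ x₂ in Ioi (1:ℝ),
      Set.indicator (Iio x₁) (fun x => x / x₁ * (α * x ^ (-(α + 1)))) x₂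
      = (α / x₁) * paretoF α x₁ := by
    rw [setIntegral_indicator measurableSet_Iio, Set.Ioi_inter_Iio]
    have hEq : Set.EqOn (fun x : ℝ => x / x₁ * (α * x ^ (-(α + 1))))
        (fun x : ℝ => (α / x₁) * x ^ (-α)) (Ioo 1 x₁) := by
      intro x hx
      have hx0 : (0:ℝ) < x := lt_trans one_pos hx.1
      have hxpow : x ^ (-α) = x * x ^ (-(α + 1)) := by
        rw [show (-α : ℝ) = 1 + (-(α + 1)) by ring, Real.rpow_add hx0, Real.rpow_one]
      simp only [hxpow]
      ring
    rw [setIntegral_congr_fun measurableSet_Ioo hEq, integral_const_mul]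
    congr 1
    rw [paretoF, intervalIntegral.integral_of_le hx₁.le, integral_Ioc_eq_integral_Ioo]
  have h2 : ∫ x₂ in Ioi (1:ℝ), (1 / x₁) * (α * x₂ ^ (-(α + 1))) = 1 / x₁ := by
    rw [integral_const_mul, integral_const_mul, integral_Ioi_rpow_of_lt hlt one_pos,
      Real.one_rpow]
    field_simp
    rw [show -(α + 1) + 1 = -α by ring, div_neg, neg_neg, div_self hα.ne']
  rw [h1, h2]

/-- If `X₁, X₂` are i.i.d. Pareto type-I with shape `α > 0` (density
`α x^{-(α+1)}` on `[1,∞)`), then `E[(X₂/X₁)·1{X₂<X₁} − 1/X₁] = −α/(2(α+1))`,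
so that the departure
`Δ_I = (α+1)·E[(X₂/X₁)·1{X₂<X₁} − 1/X₁] + α/2 = 0`. -/
theorem pareto_deltaI_zero (α : ℝ) (hα : 0 < α) :
    (∫ x₁ in Set.Ioi (1:ℝ), (∫ x₂ in Set.Ioi (1:ℝ),
        ((if x₂ < x₁ then x₂ / x₁ else 0) - 1 / x₁) * (α * x₂ ^ (-(α + 1))))
          * (α * x₁ ^ (-(α + 1)))
      = -α / (2 * (α + 1))) ∧
    ((α + 1) * (∫ x₁ in Set.Ioi (1:ℝ), (∫ x₂ in Set.Ioi (1:ℝ),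
        ((if x₂ < x₁ then x₂ / x₁ else 0) - 1 / x₁) * (α * x₂ ^ (-(α + 1))))
          * (α * x₁ ^ (-(α + 1)))) + α / 2 = 0) := by
  have h1pos : (0:ℝ) < α + 1 := by linarith
  set g : ℝ → ℝ := fun x => α ^ 2 * x ^ (-(α + 2)) * paretoF α x - α * x ^ (-(α + 2)) with hg
  have houter : Set.EqOn (fun x₁ => (∫ x₂ in Set.Ioi (1:ℝ),
      ((if x₂ < x₁ then x₂ / x₁ else 0) - 1 / x₁) * (α * x₂ ^ (-(α + 1))))
        * (α * x₁ ^ (-(α + 1)))) g (Ioi 1) := by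
    intro x₁ hx₁
    have hx₁' : (1:ℝ) < x₁ := hx₁
    have hx0 : (0:ℝ) < x₁ := lt_trans one_pos hx₁'
    simp only [hg]
    rw [pareto_inner_eq hα hx₁']
    have h2 : x₁ ^ (-(α + 2)) = x₁ ^ (-(α + 1)) / x₁ := by
      rw [show (-(α + 2) : ℝ) = -(α + 1) + (-1) by ring, Real.rpow_add hx0, Real.rpow_neg_one]
      ring
    rw [h2]
    field_simp
  have key : ∫ x₁ in Set.Ioi (1:ℝ), (∫ x₂ in Set.Ioi (1:ℝ),
      ((if x₂ < x₁ then x₂ / x₁ else 0) - 1 / x₁) * (α * x₂ ^ (-(α + 1))))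
        * (α * x₁ ^ (-(α + 1))) = -α / (2 * (α + 1)) := by
    rw [setIntegral_congr_fun measurableSet_Ioi houter]
    set G : ℝ → ℝ := fun x => -(α ^ 2 / (α + 1)) * (x ^ (-(α + 1)) * paretoF α x)
        - α / (2 * (α + 1)) * x ^ (-(2 * α)) + α / (α + 1) * x ^ (-(α + 1)) with hG
    have hderiv : ∀ x ∈ Ici (1:ℝ), HasDerivAt G (g x) x := by
      intro x hx
      have hx1 : (1:ℝ) ≤ x := hx
      have hx0 : (0:ℝ) < x := lt_of_lt_of_le one_pos hx1
      have hF := paretoF_hasDerivAt hα hx1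
      have h1 : HasDerivAt (fun y : ℝ => y ^ (-(α + 1))) (-(α + 1) * x ^ (-(α + 1) - 1)) x :=
        Real.hasDerivAt_rpow_const (Or.inl hx0.ne')
      have h2 : HasDerivAt (fun y : ℝ => y ^ (-(2 * α))) (-(2 * α) * x ^ (-(2 * α) - 1)) x :=
        Real.hasDerivAt_rpow_const (Or.inl hx0.ne')
      have hD := (((h1.mul hF).const_mul (-(α ^ 2 / (α + 1)))).sub
        (h2.const_mul (α / (2 * (α + 1))))).add (h1.const_mul (α / (α + 1)))
      refine hD.congr_deriv ?_
      have e1 : x ^ (-(α + 1) - 1) = x ^ (-(α + 2)) := by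
        rw [show (-(α + 1) - 1 : ℝ) = -(α + 2) by ring]
      have e2 : x ^ (-(α + 1)) * x ^ (-α) = x ^ (-(2 * α) - 1) := by
        rw [← Real.rpow_add hx0, show (-(α + 1) + -α : ℝ) = -(2 * α) - 1 by ring]
      rw [hg]
      simp only [e1, e2]
      field_simp
      ring
    have hint : IntegrableOn g (Ioi 1) := by
      have hlt : -(α + 1) < -1 := by linarith
      have hmble : AEStronglyMeasurable g (volume.restrict (Ioi 1)) := by
        have hFc : ContinuousOn (paretoF α) (Ioi 1) := fun x hx =>
          ((paretoF_hasDerivAt hα (le_of_lt hx)).continuousAt).continuousWithinAt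
        have hpc : ContinuousOn (fun x : ℝ => x ^ (-(α + 2))) (Ioi 1) :=
          ContinuousOn.rpow_const continuousOn_id
            (fun t ht => Or.inl (by have : (1:ℝ) < t := ht; positivity))
        exact (((continuousOn_const.mul hpc).mul hFc).sub
          (continuousOn_const.mul hpc)).aestronglyMeasurable measurableSet_Ioi
      apply Integrable.mono'
        ((integrableOn_Ioi_rpow_of_lt hlt one_pos).const_mul (α ^ 2 + α)) hmble
      rw [ae_restrict_iff' measurableSet_Ioi]
      filter_upwards with x hx
      have hx1 : (1:ℝ) ≤ x := le_of_lt hx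
      have hx0 : (0:ℝ) < x := lt_of_lt_of_le one_pos hx1
      have ht0 : 0 ≤ x ^ (-(α + 2)) := Real.rpow_nonneg hx0.le _
      have hts : x ^ (-(α + 2)) * x = x ^ (-(α + 1)) := by
        rw [show (-(α + 1) : ℝ) = -(α + 2) + 1 by ring, Real.rpow_add hx0, Real.rpow_one]
      have hFb : paretoF α x ≤ x := le_trans (paretoF_le hα hx1) (by linarith)
      have hF0 : 0 ≤ paretoF α x := paretoF_nonneg hx1
      have hbound : α ^ 2 * x ^ (-(α + 2)) * paretoF α x ≤ α ^ 2 * x ^ (-(α + 1)) := by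
        calc α ^ 2 * x ^ (-(α + 2)) * paretoF α x
            ≤ α ^ 2 * x ^ (-(α + 2)) * x := by
              apply mul_le_mul_of_nonneg_left hFb (by positivity)
          _ = α ^ 2 * x ^ (-(α + 1)) := by rw [mul_assoc, hts]
      have hts' : x ^ (-(α + 2)) ≤ x ^ (-(α + 1)) :=
        Real.rpow_le_rpow_of_exponent_le hx1 (by linarith)
      calc ‖g x‖ ≤ ‖α ^ 2 * x ^ (-(α + 2)) * paretoF α x‖ + ‖α * x ^ (-(α + 2))‖ :=
            norm_sub_le _ _
        _ = α ^ 2 * x ^ (-(α + 2)) * paretoF α x + α * x ^ (-(α + 2)) := by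
            rw [Real.norm_eq_abs, Real.norm_eq_abs, abs_of_nonneg (by positivity),
              abs_of_nonneg (by positivity)]
        _ ≤ α ^ 2 * x ^ (-(α + 1)) + α * x ^ (-(α + 1)) := by
            have := mul_le_mul_of_nonneg_left hts' hα.le
            linarith
        _ = (α ^ 2 + α) * x ^ (-(α + 1)) := by ring
    have htend : Tendsto G atTop (𝓝 0) := by
      have hA : Tendsto (fun x : ℝ => x ^ (-(α + 1)) * paretoF α x) atTop (𝓝 0) := by
        apply tendsto_of_tendsto_of_tendsto_of_le_of_le' tendsto_const_nhds
          (tendsto_rpow_neg_atTop hα)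
        · filter_upwards [eventually_ge_atTop (1:ℝ)] with x hx
          exact mul_nonneg (Real.rpow_nonneg (by linarith) _) (paretoF_nonneg hx)
        · filter_upwards [eventually_ge_atTop (1:ℝ)] with x hx
          have hx0 : (0:ℝ) < x := lt_of_lt_of_le one_pos hx
          calc x ^ (-(α + 1)) * paretoF α x
              ≤ x ^ (-(α + 1)) * x := mul_le_mul_of_nonneg_left
                (le_trans (paretoF_le hα hx) (by linarith)) (Real.rpow_nonneg hx0.le _)
            _ = x ^ (-α) := by
                rw [show (-α : ℝ) = -(α + 1) + 1 by ring, Real.rpow_add hx0, Real.rpow_one]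
      have hB := ((hA.const_mul (-(α ^ 2 / (α + 1)))).sub
        ((tendsto_rpow_neg_atTop (by positivity : (0:ℝ) < 2 * α)).const_mul
          (α / (2 * (α + 1))))).add
        ((tendsto_rpow_neg_atTop h1pos).const_mul (α / (α + 1)))
      simpa only [mul_zero, sub_self, zero_add] using hB
    rw [integral_Ioi_of_hasDerivAt_of_tendsto' hderiv hint htend]
    have hG1 : G 1 = -(α / (2 * (α + 1))) + α / (α + 1) := by
      simp [hG, paretoF, Real.one_rpow, intervalIntegral.integral_same]
    rw [hG1]
    field_simp
    ring
  refine ⟨key, ?_⟩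
  rw [key]
  field_simp
  ring
end

section
/- If X₁, X₂ are i.i.d. positive continuous random variables following Pareto type-I with shape α > 0, then the random variable max(X₁/X₂, X₂/X₁) also follows the Pareto type-I distribution with shape α, i.e., P(max(X₁/X₂, X₂/X₁) ≤ x) = 1 − x^{-α} for x ≥ 1. -/
/-!
Given `X₁ = t`, the event `max(X₁/X₂, X₂/X₁) ≤ x` is `X₂ ∈ [t/x, x t]`, of probability
`max(1, t/x)^{-α} - (x t)^{-α}`. Integrating this against the density of `X₁` separately on
`t ≤ x` and `t > x` leaves only integrals of Pareto densities, because
`t^{-α} · α t^{-(α+1)} = ½ · 2α t^{-(2α+1)}`: the minimum of two independent Pareto(α)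
variables is Pareto(2α).
-/

open MeasureTheory Set

section PowerLawDensity

variable {β a b : ℝ}

lemma integrableOn_Ioi_mul_rpow_neg (hβ : 0 < β) (ha : 0 < a) :
    IntegrableOn (fun t : ℝ => β * t ^ (-(β + 1))) (Ioi a) :=
  (integrableOn_Ioi_rpow_of_lt (by linarith) ha).const_mul β

lemma integral_Ioi_mul_rpow_neg (hβ : 0 < β) (ha : 0 < a) :
    ∫ t in Ioi a, β * t ^ (-(β + 1)) = a ^ (-β) := by
  rw [integral_const_mul, integral_Ioi_rpow_of_lt (by linarith) ha,
    show -(β + 1) + 1 = -β by ring]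
  field_simp

lemma integral_Ioc_mul_rpow_neg (hβ : 0 < β) (ha : 0 < a) (hab : a ≤ b) :
    ∫ t in Ioc a b, β * t ^ (-(β + 1)) = a ^ (-β) - b ^ (-β) := by
  have hsplit := setIntegral_union (Ioc_disjoint_Ioi le_rfl) measurableSet_Ioi
    ((integrableOn_Ioi_mul_rpow_neg hβ ha).mono_set Ioc_subset_Ioi_self)
    (integrableOn_Ioi_mul_rpow_neg hβ (ha.trans_le hab))
  rw [Ioc_union_Ioi_eq_Ioi hab, integral_Ioi_mul_rpow_neg hβ ha,
    integral_Ioi_mul_rpow_neg hβ (ha.trans_le hab)] at hsplit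
  linarith

lemma integral_Ioi_indicator_Icc_mul_rpow_neg {c : ℝ} (hβ : 0 < β) (hc : 0 < c)
    (hb : max c a ≤ b) :
    ∫ t in Ioi c, (Icc a b).indicator (fun t => β * t ^ (-(β + 1))) t
      = max c a ^ (-β) - b ^ (-β) := by
  have hset : (Ioi c ∩ Icc a b : Set ℝ) =ᵐ[volume] Ioc (max c a) b := by
    rw [max_comm, ← Ioc_inter_Ioi, inter_comm]
    exact Ioc_ae_eq_Icc.symm.inter Filter.EventuallyEq.rfl
  rw [setIntegral_indicator measurableSet_Icc, setIntegral_congr_set hset,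
    integral_Ioc_mul_rpow_neg hβ (lt_max_of_lt_left hc) hb]

lemma rpow_neg_mul_mul_rpow_neg {t : ℝ} (ht : 0 < t) :
    t ^ (-β) * (β * t ^ (-(β + 1))) = 1 / 2 * (2 * β * t ^ (-(2 * β + 1))) := by
  rw [mul_left_comm, ← Real.rpow_add ht]
  ring_nf

end PowerLawDensity

lemma max_div_le_iff_mem_Icc {s t x : ℝ} (hs : 0 < s) (ht : 0 < t) (hx : 0 < x) :
    max (s / t) (t / s) ≤ x ↔ t ∈ Icc (s / x) (x * s) := by
  rw [max_le_iff, mem_Icc, div_le_iff₀ ht, div_le_iff₀ hs, div_le_iff₀ hx]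
  constructor <;> rintro ⟨h₁, h₂⟩ <;> constructor <;> linarith

section MaxRatio

variable {α x t : ℝ}

/-- `P(max(X₁/X₂, X₂/X₁) ≤ x | X₁ = t)`. -/
noncomputable def maxRatioCondProb (α x t : ℝ) : ℝ :=
  max 1 (t / x) ^ (-α) - (x * t) ^ (-α)

lemma integral_max_ratio_le_eq_maxRatioCondProb (hα : 0 < α) (hx : 1 ≤ x) (ht : 1 < t) :
    ∫ s in Ioi 1, (if max (t / s) (s / t) ≤ x then (1 : ℝ) else 0) * (α * s ^ (-(α + 1)))
      = maxRatioCondProb α x t := by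
  have hx0 : 0 < x := by linarith
  have hb : max 1 (t / x) ≤ x * t :=
    max_le (one_le_mul_of_one_le_of_one_le hx ht.le)
      ((div_le_self (by linarith) hx).trans (le_mul_of_one_le_left (by linarith) hx))
  rw [maxRatioCondProb, ← integral_Ioi_indicator_Icc_mul_rpow_neg hα one_pos hb]
  refine setIntegral_congr_fun measurableSet_Ioi fun s hs => ?_
  rw [boole_mul, indicator_apply]
  exact if_congr (max_div_le_iff_mem_Icc (by linarith) (one_pos.trans hs) hx0) rfl rfl

lemma maxRatioCondProb_mul_of_le (hx : 0 < x) (ht : 0 < t) (htx : t ≤ x) :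
    maxRatioCondProb α x t * (α * t ^ (-(α + 1)))
      = α * t ^ (-(α + 1)) - x ^ (-α) / 2 * (2 * α * t ^ (-(2 * α + 1))) := by
  rw [maxRatioCondProb, max_eq_left ((div_le_one hx).2 htx), Real.one_rpow,
    Real.mul_rpow hx.le ht.le]
  linear_combination -x ^ (-α) * rpow_neg_mul_mul_rpow_neg (β := α) ht

lemma maxRatioCondProb_mul_of_lt (hx : 0 < x) (hxt : x < t) :
    maxRatioCondProb α x t * (α * t ^ (-(α + 1)))
      = (x ^ α - x ^ (-α)) / 2 * (2 * α * t ^ (-(2 * α + 1))) := by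
  have ht : 0 < t := hx.trans hxt
  rw [maxRatioCondProb, max_eq_right ((one_le_div hx).2 hxt.le), Real.div_rpow ht.le hx.le,
    Real.mul_rpow hx.le ht.le, div_eq_mul_inv, ← Real.rpow_neg hx.le, neg_neg]
  linear_combination (x ^ α - x ^ (-α)) * rpow_neg_mul_mul_rpow_neg (β := α) ht

lemma integral_maxRatioCondProb_mul (hα : 0 < α) (hx : 1 ≤ x) :
    ∫ t in Ioi 1, maxRatioCondProb α x t * (α * t ^ (-(α + 1))) = 1 - x ^ (-α) := by
  have hx0 : 0 < x := by linarith
  have h2α : 0 < 2 * α := by linarith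
  have hlow : EqOn (fun t => maxRatioCondProb α x t * (α * t ^ (-(α + 1))))
      (fun t => α * t ^ (-(α + 1)) - x ^ (-α) / 2 * (2 * α * t ^ (-(2 * α + 1)))) (Ioc 1 x) :=
    fun t ht => maxRatioCondProb_mul_of_le hx0 (one_pos.trans ht.1) ht.2
  have hhigh : EqOn (fun t => maxRatioCondProb α x t * (α * t ^ (-(α + 1))))
      (fun t => (x ^ α - x ^ (-α)) / 2 * (2 * α * t ^ (-(2 * α + 1)))) (Ioi x) :=
    fun t ht => maxRatioCondProb_mul_of_lt hx0 ht
  have hf₁ := (integrableOn_Ioi_mul_rpow_neg hα one_pos).mono_set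
    (Ioc_subset_Ioi_self : Ioc 1 x ⊆ Ioi 1)
  have hf₂ := (integrableOn_Ioi_mul_rpow_neg h2α one_pos).mono_set
    (Ioc_subset_Ioi_self : Ioc 1 x ⊆ Ioi 1)
  have hlowInt :=
    (hf₁.sub (hf₂.const_mul (x ^ (-α) / 2))).congr_fun hlow.symm measurableSet_Ioc
  have hhighInt := IntegrableOn.congr_fun ((integrableOn_Ioi_mul_rpow_neg h2α hx0).const_mul
    ((x ^ α - x ^ (-α)) / 2)) hhigh.symm measurableSet_Ioi
  rw [← Ioc_union_Ioi_eq_Ioi hx,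
    setIntegral_union (Ioc_disjoint_Ioi le_rfl) measurableSet_Ioi hlowInt hhighInt,
    setIntegral_congr_fun measurableSet_Ioc hlow, setIntegral_congr_fun measurableSet_Ioi hhigh,
    integral_sub hf₁ (hf₂.const_mul _), integral_const_mul (x ^ (-α) / 2),
    integral_const_mul ((x ^ α - x ^ (-α)) / 2), integral_Ioc_mul_rpow_neg hα one_pos hx,
    integral_Ioc_mul_rpow_neg h2α one_pos hx, integral_Ioi_mul_rpow_neg h2α hx0]
  have hpow : x ^ α * x ^ (-(2 * α)) = x ^ (-α) := by
    rw [← Real.rpow_add hx0]; ring_nf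
  simp only [Real.one_rpow]
  linear_combination hpow / 2

end MaxRatio

/-- If `X₁, X₂` are i.i.d. Pareto type-I with shape `α > 0`, then
`max(X₁/X₂, X₂/X₁)` is also Pareto type-I with shape `α`:
`P(max(X₁/X₂, X₂/X₁) ≤ x) = 1 − x^{-α}` for `x ≥ 1`. -/
theorem pareto_max_ratio_characterization (α : ℝ) (hα : 0 < α) (x : ℝ) (hx : 1 ≤ x) :
    ∫ x₁ in Set.Ioi (1:ℝ), (∫ x₂ in Set.Ioi (1:ℝ),
        (if max (x₁ / x₂) (x₂ / x₁) ≤ x then (1:ℝ) else 0) * (α * x₂ ^ (-(α + 1))))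
      * (α * x₁ ^ (-(α + 1)))
    = 1 - x ^ (-α) := by
  rw [setIntegral_congr_fun measurableSet_Ioi fun t ht => by
    rw [integral_max_ratio_le_eq_maxRatioCondProb hα hx ht]]
  exact integral_maxRatioCondProb_mul hα hx
end
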